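/- Under the Ewens–Pitman weight system, for every integer 0 ≤ l ≤ m, the conditional expectation of the number of old blocks re-observed with frequency l, given complete information, satisfies E[R_l | π] = (1/(θ+n)_{m↑})·binom(m,l)·Σ_{i=1}^{n} m_i·(i−σ)_{l↑}·(θ + n − i + σ)_{(m−l)↑}. -/
import Mathlib


open Finset

attribute [local instance] Classical.propDecidable

set_option linter.unusedSectionVars false
set_option linter.unusedVariables false

noncomputable section

/-- Rising factorial `x(x+1)⋯(x+N−1)`. -/
def risingFac (x : ℝ) (N : ℕ) : ℝ := ∏ i ∈ Finset.range N, (x + i)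

/-- Falling factorial `x(x−1)⋯(x−N+1)`. -/
def fallingFac (x : ℝ) (N : ℕ) : ℝ := ∏ i ∈ Finset.range N, (x - i)

/-- Noncentral generalized factorial coefficient `C(N,k;σ,γ)`. -/
def gfc (N k : ℕ) (σ γ : ℝ) : ℝ :=
  (1 / (Nat.factorial k : ℝ)) *
    ∑ i ∈ Finset.range (k + 1),
      (-1 : ℝ) ^ i * (Nat.choose k i : ℝ) * risingFac (-(i : ℝ) * σ - γ) N

/-- Central generalized factorial coefficient `C(N,k;σ)`. -/
def cgfc (N k : ℕ) (σ : ℝ) : ℝ := gfc N k σ 0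

/-- Binomial coefficient over `ℤ`, zero unless `0 ≤ b ≤ a`. -/
def ibinom (a b : ℤ) : ℝ :=
  if 0 ≤ b ∧ b ≤ a then (Nat.choose a.toNat b.toNat : ℝ) else 0

/-- Multinomial coefficient `m!/((l!)^r (m−rl)!)`, zero if `rl > m`. -/
def multinom (m l r : ℕ) : ℝ :=
  if r * l ≤ m then
    (Nat.factorial m : ℝ) / ((Nat.factorial l : ℝ) ^ r * (Nat.factorial (m - r * l) : ℝ))
  else 0

/-- `P` is a set partition of the finset `s`. -/
def IsPartOn {α : Type*} (s : Finset α) (P : Finset (Finset α)) : Prop :=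
  (∀ B ∈ P, B ⊆ s) ∧ ∅ ∉ P ∧ ∀ a ∈ s, ∃! B, B ∈ P ∧ a ∈ B

/-- Restriction of a partition to `s`. -/
def restrictPart {α : Type*} [DecidableEq α] (P : Finset (Finset α)) (s : Finset α) :
    Finset (Finset α) := (P.image fun C => C ∩ s).erase ∅

/-- Gibbs probability of a partition with block sizes `|C|` and `VN k` the Gibbs weight. -/
def gibbsW {α : Type*} (σ : ℝ) (VN : ℕ → ℝ) (P : Finset (Finset α)) : ℝ :=
  VN P.card * ∏ C ∈ P, risingFac (1 - σ) (C.card - 1)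

/-- Ewens–Pitman weight system. -/
def EPV (σ θ : ℝ) : ℕ → ℕ → ℝ :=
  fun N k => (∏ i ∈ Finset.range k, (θ + (i : ℝ) * σ)) / risingFac θ N

/-- The "old" elements `{1,…,n}` inside `{1,…,n+m}`. -/
def oldSet (n m : ℕ) : Finset (Fin (n + m)) :=
  Finset.univ.filter fun x => (x : ℕ) < n

/-- Number of new elements in the block of `ρ` containing the old block `Bi`. -/
def Scount (n m : ℕ) (Bi : Finset (Fin (n + m))) (ρ : Finset (Finset (Fin (n + m)))) : ℕ :=
  ∑ C ∈ ρ.filter (fun C => Bi ⊆ C), (C \ oldSet n m).card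

/-- Partitions of `{1,…,n+m}` extending the partition `πP` of the old elements. -/
def extensions (n m : ℕ) (πP : Finset (Finset (Fin (n + m)))) :
    Finset (Finset (Finset (Fin (n + m)))) :=
  Finset.univ.filter fun ρ => IsPartOn Finset.univ ρ ∧ restrictPart ρ (oldSet n m) = πP

/-- Conditional expectation given complete information (the initial partition `πP`). -/
def condExpPi (σ : ℝ) (V : ℕ → ℕ → ℝ) (n m : ℕ) (πP : Finset (Finset (Fin (n + m))))
    (f : Finset (Finset (Fin (n + m))) → ℝ) : ℝ :=
  (∑ ρ ∈ extensions n m πP, f ρ * gibbsW σ (V (n + m)) ρ) /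
    (∑ ρ ∈ extensions n m πP, gibbsW σ (V (n + m)) ρ)

/-- Partitions of `{1,…,n+m}` whose restriction to the old elements has exactly `j` blocks. -/
def withJ (n m j : ℕ) : Finset (Finset (Finset (Fin (n + m)))) :=
  Finset.univ.filter fun ρ =>
    IsPartOn Finset.univ ρ ∧ (restrictPart ρ (oldSet n m)).card = j

/-- Partitions of `s` with exactly `j` blocks. -/
def partsJOf {α : Type*} [Fintype α] (s : Finset α) (j : ℕ) :
    Finset (Finset (Finset α)) :=
  Finset.univ.filter fun π' => IsPartOn s π' ∧ π'.card = j

/-- Conditional expectation given the incomplete information `K_n = j`. -/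
def condExpK (σ : ℝ) (V : ℕ → ℕ → ℝ) (n m j : ℕ)
    (f : Finset (Finset (Fin (n + m))) → ℝ) : ℝ :=
  (∑ ρ ∈ withJ n m j, f ρ * gibbsW σ (V (n + m)) ρ) /
    (∑ π' ∈ partsJOf (oldSet n m) j, gibbsW σ (V n) π')

/-- Number of old blocks (indexed by `B`) re-observed in the additional sample. -/
def RcntB (n m j : ℕ) (B : Fin j → Finset (Fin (n + m)))
    (ρ : Finset (Finset (Fin (n + m)))) : ℕ :=
  (Finset.univ.filter fun i : Fin j => Scount n m (B i) ρ ≠ 0).card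

/-- Number of old blocks (indexed by `B`) re-observed with frequency `l`. -/
def RlcntB (n m j l : ℕ) (B : Fin j → Finset (Fin (n + m)))
    (ρ : Finset (Finset (Fin (n + m)))) : ℕ :=
  (Finset.univ.filter fun i : Fin j => Scount n m (B i) ρ = l).card

/-- Number of blocks of the restriction whose containing block has a new element. -/
def Rcnt (n m : ℕ) (ρ : Finset (Finset (Fin (n + m)))) : ℕ :=
  ((restrictPart ρ (oldSet n m)).filter fun Bi =>
    ∃ C ∈ ρ, Bi ⊆ C ∧ (C \ oldSet n m) ≠ ∅).card

/-- Number of blocks of the restriction whose containing block has exactly `l` new elements. -/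
def Rlcnt (n m l : ℕ) (ρ : Finset (Finset (Fin (n + m)))) : ℕ :=
  ((restrictPart ρ (oldSet n m)).filter fun Bi =>
    ∃ C ∈ ρ, Bi ⊆ C ∧ (C \ oldSet n m).card = l).card

/-- Number of bijections from `Fin j` onto the blocks of `π'` satisfying `Q`. -/
def bijCount {α : Type*} [Fintype α] (j : ℕ) (π' : Finset (Finset α))
    (Q : (Fin j → Finset α) → Prop) : ℕ :=
  ((Finset.univ : Finset (Fin j → Finset α)).filter fun β =>
    Function.Injective β ∧ Finset.image β Finset.univ = π' ∧ Q β).card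

/-- Conditional expectation given almost-complete information. -/
def condExpTau (σ : ℝ) (V : ℕ → ℕ → ℝ) (n m j p : ℕ) (τ : Fin p → Fin j) (nτ : Fin p → ℕ)
    (f : Finset (Finset (Fin (n + m))) → ℝ) : ℝ :=
  (∑ ρ ∈ withJ n m j,
      (bijCount j (restrictPart ρ (oldSet n m)) (fun β => ∀ i, (β (τ i)).card = nτ i) : ℝ) *
        f ρ * gibbsW σ (V (n + m)) ρ) /
    (∑ π' ∈ partsJOf (oldSet n m) j,
      (bijCount j π' (fun β => ∀ i, (β (τ i)).card = nτ i) : ℝ) * gibbsW σ (V n) π')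

section Aux
variable {α : Type*} [DecidableEq α]

lemma mem_restrictPart {P : Finset (Finset α)} {s D : Finset α} :
    D ∈ restrictPart P s ↔ D ≠ ∅ ∧ ∃ C ∈ P, C ∩ s = D := by
  simp [restrictPart, Finset.mem_erase, Finset.mem_image, eq_comm]

variable {U V s : Finset α} {ρ π : Finset (Finset α)}

lemma isPartOn_disjoint (h : IsPartOn U ρ) {C₁ C₂ : Finset α} {x : α}
    (h1 : C₁ ∈ ρ) (h2 : C₂ ∈ ρ) (hx1 : x ∈ C₁) (hx2 : x ∈ C₂) : C₁ = C₂ := by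
  obtain ⟨hsub, hne, hu⟩ := h
  obtain ⟨C, _, hCu⟩ := hu x (hsub _ h1 hx1)
  rw [hCu C₁ ⟨h1, hx1⟩, hCu C₂ ⟨h2, hx2⟩]

lemma isPartOn_nonempty (h : IsPartOn U ρ) {C : Finset α} (hC : C ∈ ρ) : C ≠ ∅ := by
  rintro rfl; exact h.2.1 hC

lemma isPartOn_restrict (h : IsPartOn V ρ) (hUV : U ⊆ V) :
    IsPartOn U (restrictPart ρ U) := by
  refine ⟨?_, ?_, ?_⟩
  · intro D hD
    rw [mem_restrictPart] at hD
    obtain ⟨_, C, _, rfl⟩ := hD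
    exact inter_subset_right
  · intro hD
    rw [mem_restrictPart] at hD
    exact hD.1 rfl
  · intro x hx
    obtain ⟨C, ⟨hC, hxC⟩, hCu⟩ := h.2.2 x (hUV hx)
    refine ⟨C ∩ U, ⟨?_, mem_inter.2 ⟨hxC, hx⟩⟩, ?_⟩
    · rw [mem_restrictPart]
      exact ⟨Finset.ne_empty_of_mem (mem_inter.2 ⟨hxC, hx⟩), C, hC, rfl⟩
    · rintro D ⟨hD, hxD⟩
      rw [mem_restrictPart] at hD
      obtain ⟨_, C', hC', rfl⟩ := hD
      rw [hCu C' ⟨hC', (mem_inter.1 hxD).1⟩]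

lemma restrict_restrict (hsU : s ⊆ U) (ρ : Finset (Finset α)) :
    restrictPart (restrictPart ρ U) s = restrictPart ρ s := by
  ext E
  simp only [mem_restrictPart]
  constructor
  · rintro ⟨hE, E', hE', rfl⟩
    obtain ⟨_, C, hC, rfl⟩ := hE'
    exact ⟨hE, C, hC, by rw [inter_assoc, inter_eq_right.2 hsU]⟩
  · rintro ⟨hE, C, hC, rfl⟩
    refine ⟨hE, C ∩ U, ⟨fun he => hE ?_, C, hC, rfl⟩, by rw [inter_assoc, inter_eq_right.2 hsU]⟩
    rw [← inter_eq_right.2 hsU, ← inter_assoc, he, empty_inter]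

lemma restrictPart_self (h : IsPartOn s π) : restrictPart π s = π := by
  ext D
  rw [mem_restrictPart]
  constructor
  · rintro ⟨hD, C, hC, rfl⟩
    rwa [inter_eq_left.2 (h.1 _ hC)]
  · intro hD
    exact ⟨isPartOn_nonempty h hD, D, hD, inter_eq_left.2 (h.1 _ hD)⟩

lemma isPartOn_biUnion (h : IsPartOn U ρ) : ρ.biUnion id = U := by
  ext x
  simp only [mem_biUnion, id]
  constructor
  · rintro ⟨C, hC, hx⟩; exact h.1 _ hC hx
  · intro hx
    obtain ⟨C, ⟨hC, hxC⟩, _⟩ := h.2.2 x hx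
    exact ⟨C, hC, hxC⟩

lemma isPartOn_sum_card (h : IsPartOn U ρ) : ∑ C ∈ ρ, C.card = U.card := by
  have hd : ∀ C₁ ∈ ρ, ∀ C₂ ∈ ρ, C₁ ≠ C₂ → Disjoint (id C₁) (id C₂) := by
    intro C₁ h1 C₂ h2 hne
    simp only [id]
    rw [Finset.disjoint_left]
    intro x hx1 hx2
    exact hne (isPartOn_disjoint h h1 h2 hx1 hx2)
  have := Finset.card_biUnion hd
  rw [isPartOn_biUnion h] at this
  simpa using this.symm

lemma filter_superset_eq_singleton (h : IsPartOn U ρ) (hres : restrictPart ρ s = π)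
    {Bi : Finset α} (hBi : Bi ∈ π) :
    ∃ C, ρ.filter (fun C => Bi ⊆ C) = {C} ∧ C ∈ ρ ∧ C ∩ s = Bi := by
  subst hres
  rw [mem_restrictPart] at hBi
  obtain ⟨hne, C, hC, hCs⟩ := hBi
  obtain ⟨b, hb⟩ := Finset.nonempty_iff_ne_empty.2 hne
  refine ⟨C, ?_, hC, hCs⟩
  ext C'
  simp only [mem_filter, mem_singleton]
  constructor
  · rintro ⟨hC', hsub⟩
    have hbC : b ∈ C := by
      have hb' := hb
      rw [← hCs] at hb'
      exact (mem_inter.1 hb').1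
    exact isPartOn_disjoint h hC' hC (hsub hb) hbC
  · rintro rfl
    refine ⟨hC, ?_⟩
    rw [← hCs]
    exact inter_subset_left

end Aux

section Aux2
variable {α : Type*} [DecidableEq α]

/-- Insert a new element `a` into the block `D.erase a` (or as a singleton). -/
def bldP (a : α) (ρ' : Finset (Finset α)) (D : Finset α) : Finset (Finset α) :=
  insert D (ρ'.erase (D.erase a))

/-- Possible blocks containing the new element `a`. -/
def optsP (a : α) (ρ' : Finset (Finset α)) : Finset (Finset α) :=
  insert {a} (ρ'.image (insert a))

/-- The block of `ρ` containing `a`. -/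
def blkA (a : α) (ρ : Finset (Finset α)) : Finset α :=
  (ρ.filter fun C => a ∈ C).sup id

variable {U s : Finset α} {ρ ρ' π : Finset (Finset α)} {a : α} {D : Finset α}

lemma mem_optsP : D ∈ optsP a ρ' ↔ D = {a} ∨ ∃ C ∈ ρ', D = insert a C := by
  simp [optsP, eq_comm]

lemma optsP_basic (hρ' : IsPartOn U ρ') (ha : a ∉ U) (hD : D ∈ optsP a ρ') :
    a ∈ D ∧ insert a (D.erase a) = D ∧ (D.erase a = ∅ ∨ D.erase a ∈ ρ') ∧ D.erase a ⊆ U := by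
  have hna : ∀ C ∈ ρ', a ∉ C := fun C hC h => ha (hρ'.1 C hC h)
  rcases mem_optsP.1 hD with rfl | ⟨C, hC, rfl⟩
  · simp
  · have haC : a ∉ C := hna C hC
    rw [Finset.erase_insert haC]
    exact ⟨mem_insert_self _ _, rfl, Or.inr hC, hρ'.1 C hC⟩

lemma mem_bldP {C' : Finset α} :
    C' ∈ bldP a ρ' D ↔ C' = D ∨ (C' ∈ ρ' ∧ C' ≠ D.erase a) := by
  simp [bldP, Finset.mem_insert, Finset.mem_erase, and_comm]

lemma bldP_isPartOn (hρ' : IsPartOn U ρ') (ha : a ∉ U) (hD : D ∈ optsP a ρ') :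
    IsPartOn (insert a U) (bldP a ρ' D) := by
  obtain ⟨haD, hins, hC0, hC0U⟩ := optsP_basic hρ' ha hD
  have hna : ∀ C ∈ ρ', a ∉ C := fun C hC h => ha (hρ'.1 C hC h)
  refine ⟨?_, ?_, ?_⟩
  · intro C' hC'
    rcases mem_bldP.1 hC' with rfl | ⟨hC', _⟩
    · rw [← hins]
      exact Finset.insert_subset_insert _ hC0U
    · exact (hρ'.1 _ hC').trans (Finset.subset_insert _ _)
  · intro hmem
    rcases mem_bldP.1 hmem with h | ⟨h, _⟩
    · exact absurd (h ▸ haD) (Finset.notMem_empty a)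
    · exact hρ'.2.1 h
  · intro x hx
    rcases Finset.mem_insert.1 hx with rfl | hxU
    · refine ⟨D, ⟨Finset.mem_insert_self _ _, haD⟩, ?_⟩
      rintro C' ⟨hC', hxC'⟩
      rcases mem_bldP.1 hC' with rfl | ⟨hC', _⟩
      · rfl
      · exact absurd hxC' (hna _ hC')
    · have hxa : x ≠ a := fun h => ha (h ▸ hxU)
      obtain ⟨C, ⟨hC, hxC⟩, hCu⟩ := hρ'.2.2 x hxU
      by_cases hC0eq : C = D.erase a
      · refine ⟨D, ⟨Finset.mem_insert_self _ _, ?_⟩, ?_⟩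
        · rw [← hins]
          exact Finset.mem_insert_of_mem (hC0eq ▸ hxC)
        · rintro C' ⟨hC', hxC'⟩
          rcases mem_bldP.1 hC' with rfl | ⟨hC', hne⟩
          · rfl
          · exact absurd ((hCu C' ⟨hC', hxC'⟩).trans hC0eq) hne
      · refine ⟨C, ⟨mem_bldP.2 (Or.inr ⟨hC, hC0eq⟩), hxC⟩, ?_⟩
        rintro C' ⟨hC', hxC'⟩
        rcases mem_bldP.1 hC' with rfl | ⟨hC', _⟩
        · exfalso
          have hxC0 : x ∈ C'.erase a := Finset.mem_erase.2 ⟨hxa, hxC'⟩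
          rcases hC0 with h | h
          · rw [h] at hxC0; exact Finset.notMem_empty x hxC0
          · exact hC0eq ((hCu _ ⟨h, hxC0⟩).symm)
        · exact hCu C' ⟨hC', hxC'⟩

lemma bldP_restrict_s (hρ' : IsPartOn U ρ') (ha : a ∉ U) (hD : D ∈ optsP a ρ')
    (hsU : s ⊆ U) :
    restrictPart (bldP a ρ' D) s = restrictPart ρ' s := by
  obtain ⟨haD, hins, hC0, hC0U⟩ := optsP_basic hρ' ha hD
  have has : a ∉ s := fun h => ha (hsU h)
  have hDs : D ∩ s = (D.erase a) ∩ s := by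
    conv_lhs => rw [← hins]
    rw [Finset.insert_inter_of_notMem has]
  ext E
  rw [mem_restrictPart, mem_restrictPart]
  constructor
  · rintro ⟨hE, C', hC', rfl⟩
    rcases mem_bldP.1 hC' with rfl | ⟨hC', _⟩
    · rw [hDs] at hE ⊢
      rcases hC0 with h | h
      · rw [h] at hE; simp at hE
      · exact ⟨hE, _, h, rfl⟩
    · exact ⟨hE, C', hC', rfl⟩
  · rintro ⟨hE, C, hC, rfl⟩
    by_cases hCeq : C = D.erase a
    · exact ⟨hE, D, mem_bldP.2 (Or.inl rfl), by rw [hDs, hCeq]⟩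
    · exact ⟨hE, C, mem_bldP.2 (Or.inr ⟨hC, hCeq⟩), rfl⟩

lemma bldP_restrict_U (hρ' : IsPartOn U ρ') (ha : a ∉ U) (hD : D ∈ optsP a ρ') :
    restrictPart (bldP a ρ' D) U = ρ' := by
  obtain ⟨haD, hins, hC0, hC0U⟩ := optsP_basic hρ' ha hD
  have hDU : D ∩ U = D.erase a := by
    conv_lhs => rw [← hins]
    rw [Finset.insert_inter_of_notMem ha, Finset.inter_eq_left.2 hC0U]
  ext E
  rw [mem_restrictPart]
  constructor
  · rintro ⟨hE, C', hC', rfl⟩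
    rcases mem_bldP.1 hC' with rfl | ⟨hC', _⟩
    · rw [hDU] at hE ⊢
      rcases hC0 with h | h
      · exact absurd h hE
      · exact h
    · rwa [Finset.inter_eq_left.2 (hρ'.1 _ hC')]
  · intro hE
    by_cases hCeq : E = D.erase a
    · exact ⟨isPartOn_nonempty hρ' hE, D, mem_bldP.2 (Or.inl rfl), by rw [hDU, ← hCeq]⟩
    · exact ⟨isPartOn_nonempty hρ' hE, E, mem_bldP.2 (Or.inr ⟨hE, hCeq⟩),
        Finset.inter_eq_left.2 (hρ'.1 _ hE)⟩

lemma blkA_eq_of_filter {Da : Finset α} (h : ρ.filter (fun C => a ∈ C) = {Da}) :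
    blkA a ρ = Da := by
  rw [blkA, h, Finset.sup_singleton]; rfl

lemma blkA_bldP (hρ' : IsPartOn U ρ') (ha : a ∉ U) (hD : D ∈ optsP a ρ') :
    blkA a (bldP a ρ' D) = D := by
  obtain ⟨haD, hins, hC0, hC0U⟩ := optsP_basic hρ' ha hD
  have hna : ∀ C ∈ ρ', a ∉ C := fun C hC h => ha (hρ'.1 C hC h)
  apply blkA_eq_of_filter
  ext C'
  simp only [Finset.mem_filter, Finset.mem_singleton]
  constructor
  · rintro ⟨hC', haC'⟩
    rcases mem_bldP.1 hC' with rfl | ⟨hC', _⟩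
    · rfl
    · exact absurd haC' (hna _ hC')
  · rintro rfl
    exact ⟨mem_bldP.2 (Or.inl rfl), haD⟩

lemma rev_bldP (hρ : IsPartOn (insert a U) ρ) (ha : a ∉ U) :
    blkA a ρ ∈ optsP a (restrictPart ρ U) ∧ bldP a (restrictPart ρ U) (blkA a ρ) = ρ := by
  obtain ⟨Da, ⟨hDa, haDa⟩, hDau⟩ := hρ.2.2 a (Finset.mem_insert_self a U)
  have hblk : blkA a ρ = Da := by
    apply blkA_eq_of_filter
    ext C'
    simp only [Finset.mem_filter, Finset.mem_singleton]
    exact ⟨fun ⟨h1, h2⟩ => hDau C' ⟨h1, h2⟩, fun h => h ▸ ⟨hDa, haDa⟩⟩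
  have hkey : ∀ C ∈ ρ, C ≠ Da → a ∉ C := by
    intro C hC hne haC
    exact hne (hDau C ⟨hC, haC⟩)
  have hsubU : ∀ C ∈ ρ, C ≠ Da → C ⊆ U := by
    intro C hC hne x hx
    rcases Finset.mem_insert.1 (hρ.1 C hC hx) with rfl | h
    · exact absurd hx (hkey C hC hne)
    · exact h
  have hDaU : Da ∩ U = Da.erase a := by
    ext x
    simp only [Finset.mem_inter, Finset.mem_erase]
    constructor
    · rintro ⟨h1, h2⟩
      exact ⟨fun h => ha (h ▸ h2), h1⟩
    · rintro ⟨h1, h2⟩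
      refine ⟨h2, ?_⟩
      rcases Finset.mem_insert.1 (hρ.1 Da hDa h2) with rfl | h
      · exact absurd rfl h1
      · exact h
  have hmem' : ∀ E : Finset α, E ∈ restrictPart ρ U ↔
      (E ∈ ρ ∧ E ≠ Da) ∨ (E = Da.erase a ∧ E ≠ ∅) := by
    intro E
    rw [mem_restrictPart]
    constructor
    · rintro ⟨hE, C, hC, rfl⟩
      by_cases hCeq : C = Da
      · subst hCeq
        exact Or.inr ⟨hDaU, hE⟩
      · rw [Finset.inter_eq_left.2 (hsubU C hC hCeq)]
        exact Or.inl ⟨hC, hCeq⟩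
    · rintro (⟨hE, hne⟩ | ⟨rfl, hne⟩)
      · exact ⟨isPartOn_nonempty hρ hE, E, hE, Finset.inter_eq_left.2 (hsubU E hE hne)⟩
      · exact ⟨hne, Da, hDa, hDaU⟩
  rw [hblk]
  constructor
  · rw [mem_optsP]
    by_cases h0 : Da.erase a = ∅
    · left
      rcases (Finset.erase_eq_empty_iff Da a).1 h0 with h | h
      · exact absurd h (isPartOn_nonempty hρ hDa)
      · exact h
    · right
      exact ⟨Da.erase a, (hmem' _).2 (Or.inr ⟨rfl, h0⟩), (Finset.insert_erase haDa).symm⟩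
  · ext E
    rw [mem_bldP]
    constructor
    · rintro (rfl | ⟨hE, hne⟩)
      · exact hDa
      · rcases (hmem' E).1 hE with ⟨h, _⟩ | ⟨h, _⟩
        · exact h
        · exact absurd h hne
    · intro hE
      by_cases hEeq : E = Da
      · exact Or.inl hEeq
      · refine Or.inr ⟨(hmem' E).2 (Or.inl ⟨hE, hEeq⟩), ?_⟩
        intro hEe
        obtain ⟨x, hx⟩ := Finset.nonempty_iff_ne_empty.2 (isPartOn_nonempty hρ hE)
        have hxDa : x ∈ Da := Finset.mem_of_mem_erase (hEe ▸ hx)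
        exact hEeq (isPartOn_disjoint hρ hE hDa hx hxDa)

variable [Fintype α]

/-- Partitions of `U` restricting to `π` on `s`. -/
def ExtP (s U : Finset α) (π : Finset (Finset α)) : Finset (Finset (Finset α)) :=
  Finset.univ.filter fun ρ => IsPartOn U ρ ∧ restrictPart ρ s = π

lemma mem_ExtP {ρ : Finset (Finset α)} :
    ρ ∈ ExtP s U π ↔ IsPartOn U ρ ∧ restrictPart ρ s = π := by
  simp [ExtP]

lemma ext_insert_sum (hsU : s ⊆ U) (ha : a ∉ U) (F : Finset (Finset α) → ℝ) :
    ∑ ρ ∈ ExtP s (insert a U) π, F ρ =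
      ∑ ρ' ∈ ExtP s U π, ∑ D ∈ optsP a ρ', F (bldP a ρ' D) := by
  have hmap : ∀ ρ ∈ ExtP s (insert a U) π, restrictPart ρ U ∈ ExtP s U π := by
    intro ρ hρ
    rw [mem_ExtP] at hρ ⊢
    exact ⟨isPartOn_restrict hρ.1 (Finset.subset_insert a U),
      (restrict_restrict hsU ρ).trans hρ.2⟩
  rw [← Finset.sum_fiberwise_of_maps_to hmap F]
  apply Finset.sum_congr rfl
  intro ρ' hρ'
  rw [mem_ExtP] at hρ'
  apply Finset.sum_nbij' (i := fun ρ => blkA a ρ) (j := fun D => bldP a ρ' D)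
  · intro ρ hρ
    rw [Finset.mem_filter] at hρ
    obtain ⟨hρe, hres⟩ := hρ
    rw [mem_ExtP] at hρe
    have := (rev_bldP hρe.1 ha).1
    rwa [hres] at this
  · intro D hD
    rw [Finset.mem_filter, mem_ExtP]
    exact ⟨⟨bldP_isPartOn hρ'.1 ha hD,
      (bldP_restrict_s hρ'.1 ha hD hsU).trans hρ'.2⟩, bldP_restrict_U hρ'.1 ha hD⟩
  · intro ρ hρ
    rw [Finset.mem_filter] at hρ
    obtain ⟨hρe, hres⟩ := hρ
    rw [mem_ExtP] at hρe
    have := (rev_bldP hρe.1 ha).2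
    rwa [hres] at this
  · intro D hD
    exact blkA_bldP hρ'.1 ha hD
  · intro ρ hρ
    rw [Finset.mem_filter] at hρ
    obtain ⟨hρe, hres⟩ := hρ
    rw [mem_ExtP] at hρe
    have := (rev_bldP hρe.1 ha).2
    rw [hres] at this
    rw [this]

end Aux2

section Aux3
variable {α : Type*} [DecidableEq α]

def wgt (σ θ : ℝ) (ρ : Finset (Finset α)) : ℝ :=
  (∏ t ∈ Finset.range ρ.card, (θ + (t : ℝ) * σ)) *
    ∏ C ∈ ρ, risingFac (1 - σ) (C.card - 1)

def scnt (s Bi : Finset α) (ρ : Finset (Finset α)) : ℕ :=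
  ∑ C ∈ ρ.filter (fun C => Bi ⊆ C), (C \ s).card

lemma risingFac_succ (x : ℝ) (k : ℕ) :
    risingFac x (k + 1) = risingFac x k * (x + k) := Finset.prod_range_succ _ _

lemma risingFac_zero (x : ℝ) : risingFac x 0 = 1 := Finset.prod_range_zero _

variable {U s Bi C D : Finset α} {ρ ρ' π : Finset (Finset α)} {a : α} {σ θ : ℝ}

lemma singleton_a_notMem (hρ' : IsPartOn U ρ') (ha : a ∉ U) : {a} ∉ ρ' :=
  fun h => ha (hρ'.1 _ h (Finset.mem_singleton_self a))

lemma notMem_of_isPartOn (hρ' : IsPartOn U ρ') (ha : a ∉ U) (hC : C ∈ ρ') : a ∉ C :=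
  fun h => ha (hρ'.1 _ hC h)

lemma insert_a_notMem_erase (hρ' : IsPartOn U ρ') (ha : a ∉ U) :
    insert a C ∉ ρ'.erase C :=
  fun h => ha (hρ'.1 _ (Finset.mem_of_mem_erase h) (Finset.mem_insert_self a C))

lemma bldP_singleton (hne : ∅ ∉ ρ') : bldP a ρ' {a} = insert {a} ρ' := by
  rw [bldP, Finset.erase_singleton, Finset.erase_eq_of_notMem hne]

lemma bldP_insert_eq (haC : a ∉ C) :
    bldP a ρ' (insert a C) = insert (insert a C) (ρ'.erase C) := by
  rw [bldP, Finset.erase_insert haC]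

lemma wgt_bld_singleton (hρ' : IsPartOn U ρ') (ha : a ∉ U) :
    wgt σ θ (bldP a ρ' {a}) = (θ + ρ'.card * σ) * wgt σ θ ρ' := by
  rw [bldP_singleton hρ'.2.1, wgt, wgt,
    Finset.card_insert_of_notMem (singleton_a_notMem hρ' ha),
    Finset.prod_insert (singleton_a_notMem hρ' ha), Finset.prod_range_succ]
  simp only [Finset.card_singleton, Nat.sub_self, risingFac_zero]
  ring

lemma wgt_bld_insert (hρ' : IsPartOn U ρ') (ha : a ∉ U) (hC : C ∈ ρ') :
    wgt σ θ (bldP a ρ' (insert a C)) = ((C.card : ℝ) - σ) * wgt σ θ ρ' := by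
  have haC : a ∉ C := notMem_of_isPartOn hρ' ha hC
  have hc1 : 1 ≤ C.card :=
    Finset.card_pos.2 (Finset.nonempty_iff_ne_empty.2 (isPartOn_nonempty hρ' hC))
  rw [bldP_insert_eq haC, wgt, wgt,
    Finset.card_insert_of_notMem (insert_a_notMem_erase hρ' ha),
    Finset.card_erase_add_one hC,
    Finset.prod_insert (insert_a_notMem_erase hρ' ha)]
  have h1 : risingFac (1 - σ) ((insert a C).card - 1) =
      ((C.card : ℝ) - σ) * risingFac (1 - σ) (C.card - 1) := by
    rw [Finset.card_insert_of_notMem haC]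
    have h2 : C.card + 1 - 1 = (C.card - 1) + 1 := by omega
    rw [h2, risingFac_succ]
    have h3 : ((C.card - 1 : ℕ) : ℝ) = (C.card : ℝ) - 1 := by
      push_cast [Nat.cast_sub hc1]; ring
    rw [h3]; ring
  rw [h1, ← Finset.mul_prod_erase ρ' (fun C => risingFac (1 - σ) (C.card - 1)) hC]
  ring

lemma sum_optsP (hρ' : IsPartOn U ρ') (ha : a ∉ U) (f : Finset α → ℝ) :
    ∑ D ∈ optsP a ρ', f D = f {a} + ∑ C ∈ ρ', f (insert a C) := by
  have hna : ∀ C ∈ ρ', a ∉ C := fun C hC => notMem_of_isPartOn hρ' ha hC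
  have hnotmem : {a} ∉ ρ'.image (insert a) := by
    rw [Finset.mem_image]
    rintro ⟨C, hC, hCe⟩
    have hCempty : C = ∅ := by
      rw [← Finset.erase_insert (hna C hC), hCe, Finset.erase_singleton]
    exact hρ'.2.1 (hCempty ▸ hC)
  have hinj : ∀ C ∈ ρ', ∀ C' ∈ ρ', insert a C = insert a C' → C = C' := by
    intro C hC C' hC' h
    rw [← Finset.erase_insert (hna C hC), h, Finset.erase_insert (hna C' hC')]
  rw [optsP, Finset.sum_insert hnotmem, Finset.sum_image hinj]

lemma scnt_singleton_filter {Cs : Finset α}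
    (hfil : ρ'.filter (fun C => Bi ⊆ C) = {Cs}) : scnt s Bi ρ' = (Cs \ s).card := by
  rw [scnt, hfil, Finset.sum_singleton]

lemma scnt_bld_singleton (hρ' : IsPartOn U ρ') (ha : a ∉ U) (hB : ¬ Bi ⊆ {a}) :
    scnt s Bi (bldP a ρ' {a}) = scnt s Bi ρ' := by
  rw [bldP_singleton hρ'.2.1, scnt, scnt, Finset.filter_insert, if_neg hB]

lemma scnt_bld_insert {Cs : Finset α} (hρ' : IsPartOn U ρ') (ha : a ∉ U)
    (hC : C ∈ ρ') (haBi : a ∉ Bi) (has : a ∉ s)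
    (hfil : ρ'.filter (fun C => Bi ⊆ C) = {Cs}) :
    scnt s Bi (bldP a ρ' (insert a C)) =
      if C = Cs then scnt s Bi ρ' + 1 else scnt s Bi ρ' := by
  have haC : a ∉ C := notMem_of_isPartOn hρ' ha hC
  have hsubiff : Bi ⊆ insert a C ↔ Bi ⊆ C := Finset.subset_insert_iff_of_notMem haBi
  rw [bldP_insert_eq haC, scnt, Finset.filter_insert,
    Finset.filter_erase (fun C => Bi ⊆ C) C ρ', hfil]
  by_cases hCeq : C = Cs
  · subst hCeq
    have hBC : Bi ⊆ C := by
      have : C ∈ ρ'.filter (fun C' => Bi ⊆ C') := hfil ▸ Finset.mem_singleton_self C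
      exact (Finset.mem_filter.1 this).2
    rw [if_pos (hsubiff.2 hBC), Finset.erase_singleton, if_pos rfl,
      Finset.sum_insert (Finset.notMem_empty _), Finset.sum_empty,
      scnt_singleton_filter hfil, Finset.insert_sdiff_of_notMem _ has,
      Finset.card_insert_of_notMem (fun h => haC (Finset.mem_sdiff.1 h).1)]
    omega
  · have hBC : ¬ Bi ⊆ C := by
      intro h
      have : C ∈ ρ'.filter (fun C' => Bi ⊆ C') := Finset.mem_filter.2 ⟨hC, h⟩
      rw [hfil, Finset.mem_singleton] at this
      exact hCeq this
    rw [if_neg (fun h => hBC (hsubiff.1 h)),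
      Finset.erase_eq_of_notMem (by simpa using hCeq), if_neg hCeq,
      scnt, hfil]

lemma superblock_card (hρ' : IsPartOn U ρ') {Cs : Finset α} (hCs : Cs ∈ ρ')
    (hCsS : Cs ∩ s = Bi) (hfil : ρ'.filter (fun C => Bi ⊆ C) = {Cs}) :
    Cs.card = Bi.card + scnt s Bi ρ' := by
  rw [scnt_singleton_filter hfil, ← hCsS, ← Finset.card_inter_add_card_sdiff Cs s]

end Aux3

section Aux4
variable {α : Type*} [DecidableEq α] [Fintype α]
variable {s Bi : Finset α} {π : Finset (Finset α)} {σ θ : ℝ}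

lemma ExtP_self (hπ : IsPartOn s π) : ExtP s s π = {π} := by
  ext ρ
  rw [mem_ExtP, Finset.mem_singleton]
  constructor
  · rintro ⟨h1, h2⟩
    rw [← restrictPart_self h1]
    exact h2
  · rintro rfl
    exact ⟨hπ, restrictPart_self hπ⟩

lemma scnt_base (hπ : IsPartOn s π) : scnt s Bi π = 0 := by
  apply Finset.sum_eq_zero
  intro C hC
  rw [Finset.card_eq_zero, Finset.sdiff_eq_empty_iff_subset]
  exact hπ.1 _ (Finset.mem_filter.1 hC).1

lemma sum_wgt_ExtP (σ θ : ℝ) (hπ : IsPartOn s π) :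
    ∀ S : Finset α, Disjoint S s →
      ∑ ρ ∈ ExtP s (s ∪ S) π, wgt σ θ ρ =
        wgt σ θ π * risingFac (θ + s.card) S.card := by
  intro S
  induction S using Finset.induction_on with
  | empty =>
    intro _
    rw [Finset.union_empty, ExtP_self hπ, Finset.sum_singleton, Finset.card_empty,
      risingFac_zero, mul_one]
  | @insert a S haS ih =>
    intro hdisj
    have has : a ∉ s := (Finset.disjoint_insert_left.1 hdisj).1
    have hdS : Disjoint S s := (Finset.disjoint_insert_left.1 hdisj).2
    have haU : a ∉ s ∪ S := by simp [has, haS]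
    have hcard : (s ∪ S).card = s.card + S.card :=
      Finset.card_union_of_disjoint hdS.symm
    rw [Finset.union_insert, ext_insert_sum Finset.subset_union_left haU]
    have step : ∀ ρ' ∈ ExtP s (s ∪ S) π,
        ∑ D ∈ optsP a ρ', wgt σ θ (bldP a ρ' D) =
          (θ + (s.card : ℝ) + (S.card : ℝ)) * wgt σ θ ρ' := by
      intro ρ' hm
      rw [mem_ExtP] at hm
      rw [sum_optsP hm.1 haU, wgt_bld_singleton hm.1 haU,
        Finset.sum_congr rfl (fun C hC => wgt_bld_insert hm.1 haU hC),
        ← Finset.sum_mul]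
      have hsum : ∑ C ∈ ρ', ((C.card : ℝ) - σ) =
          ((s.card : ℝ) + (S.card : ℝ)) - (ρ'.card : ℝ) * σ := by
        rw [Finset.sum_sub_distrib, Finset.sum_const, nsmul_eq_mul, ← Nat.cast_sum,
          isPartOn_sum_card hm.1, hcard]
        push_cast; ring
      rw [hsum]; ring
    rw [Finset.sum_congr rfl step, ← Finset.mul_sum, ih hdS,
      Finset.card_insert_of_notMem haS, risingFac_succ]
    push_cast; ring

lemma sum_wgt_scnt_ExtP (σ θ : ℝ) (hπ : IsPartOn s π) (hBi : Bi ∈ π) :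
    ∀ S : Finset α, Disjoint S s → ∀ l : ℕ,
      (∑ ρ ∈ ExtP s (s ∪ S) π, if scnt s Bi ρ = l then wgt σ θ ρ else 0) =
        wgt σ θ π * (S.card.choose l : ℝ) * risingFac ((Bi.card : ℝ) - σ) l *
          risingFac (θ + (s.card : ℝ) - (Bi.card : ℝ) + σ) (S.card - l) := by
  intro S
  induction S using Finset.induction_on with
  | empty =>
    intro _ l
    rw [Finset.union_empty, ExtP_self hπ, Finset.sum_singleton, scnt_base hπ,
      Finset.card_empty]
    cases l with
    | zero => simp [risingFac_zero]
    | succ l' =>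
      rw [if_neg (by omega), Nat.choose_eq_zero_of_lt (by omega)]
      simp
  | @insert a S haS ih =>
    intro hdisj l
    have has : a ∉ s := (Finset.disjoint_insert_left.1 hdisj).1
    have hdS : Disjoint S s := (Finset.disjoint_insert_left.1 hdisj).2
    have haU : a ∉ s ∪ S := by simp [has, haS]
    have hcard : (s ∪ S).card = s.card + S.card :=
      Finset.card_union_of_disjoint hdS.symm
    have haBi : a ∉ Bi := fun h => has (hπ.1 _ hBi h)
    have hBne : ¬ Bi ⊆ {a} := by
      obtain ⟨b, hb⟩ := Finset.nonempty_iff_ne_empty.2 (isPartOn_nonempty hπ hBi)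
      intro h
      have hba := Finset.mem_singleton.1 (h hb)
      exact has (hba ▸ hπ.1 _ hBi hb)
    rw [Finset.union_insert,
      ext_insert_sum Finset.subset_union_left haU
        (F := fun ρ => if scnt s Bi ρ = l then wgt σ θ ρ else 0)]
    have key : ∀ ρ' ∈ ExtP s (s ∪ S) π,
        (∑ D ∈ optsP a ρ',
            if scnt s Bi (bldP a ρ' D) = l then wgt σ θ (bldP a ρ' D) else 0) =
          (if scnt s Bi ρ' + 1 = l then
              ((Bi.card : ℝ) + (scnt s Bi ρ' : ℝ) - σ) * wgt σ θ ρ' else 0)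
          + (if scnt s Bi ρ' = l then
              (θ + (s.card : ℝ) + (S.card : ℝ) - (Bi.card : ℝ) - (scnt s Bi ρ' : ℝ) + σ) *
                wgt σ θ ρ' else 0) := by
      intro ρ' hm
      rw [mem_ExtP] at hm
      obtain ⟨Cs, hfil, hCsmem, hCsS⟩ := filter_superset_eq_singleton hm.1 hm.2 hBi
      have hccard : Cs.card = Bi.card + scnt s Bi ρ' :=
        superblock_card hm.1 hCsmem hCsS hfil
      rw [sum_optsP hm.1 haU, scnt_bld_singleton hm.1 haU hBne,
        wgt_bld_singleton hm.1 haU, ← Finset.add_sum_erase ρ' _ hCsmem,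
        scnt_bld_insert hm.1 haU hCsmem haBi has hfil, if_pos rfl,
        wgt_bld_insert hm.1 haU hCsmem]
      have herase : (∑ C ∈ ρ'.erase Cs,
          if scnt s Bi (bldP a ρ' (insert a C)) = l
            then wgt σ θ (bldP a ρ' (insert a C)) else 0) =
          (if scnt s Bi ρ' = l then
            ((s.card : ℝ) + (S.card : ℝ) - (Cs.card : ℝ) - ((ρ'.card : ℝ) - 1) * σ) *
              wgt σ θ ρ' else 0) := by
        have hterm : ∀ C ∈ ρ'.erase Cs,
            (if scnt s Bi (bldP a ρ' (insert a C)) = l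
              then wgt σ θ (bldP a ρ' (insert a C)) else 0) =
            (if scnt s Bi ρ' = l then ((C.card : ℝ) - σ) * wgt σ θ ρ' else 0) := by
          intro C hCe
          have hCne : C ≠ Cs := (Finset.mem_erase.1 hCe).1
          have hCmem : C ∈ ρ' := Finset.mem_of_mem_erase hCe
          rw [scnt_bld_insert hm.1 haU hCmem haBi has hfil, if_neg hCne,
            wgt_bld_insert hm.1 haU hCmem]
        rw [Finset.sum_congr rfl hterm]
        by_cases hc : scnt s Bi ρ' = l
        · simp only [if_pos hc]
          rw [← Finset.sum_mul, Finset.sum_erase_eq_sub hCsmem]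
          have hsum : ∑ C ∈ ρ', ((C.card : ℝ) - σ) =
              ((s.card : ℝ) + (S.card : ℝ)) - (ρ'.card : ℝ) * σ := by
            rw [Finset.sum_sub_distrib, Finset.sum_const, nsmul_eq_mul, ← Nat.cast_sum,
              isPartOn_sum_card hm.1, hcard]
            push_cast; ring
          rw [hsum]; ring
        · simp only [if_neg hc, Finset.sum_const_zero]
      rw [herase]
      have hCscast : (Cs.card : ℝ) = (Bi.card : ℝ) + (scnt s Bi ρ' : ℝ) := by
        rw [hccard]; push_cast; ring
      rw [hCscast]
      split_ifs with h1 h2 <;> first | (exfalso; omega) | ring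
    rw [Finset.sum_congr rfl key, Finset.sum_add_distrib]
    have hrest : (∑ ρ' ∈ ExtP s (s ∪ S) π,
        if scnt s Bi ρ' = l then
          (θ + (s.card : ℝ) + (S.card : ℝ) - (Bi.card : ℝ) - (scnt s Bi ρ' : ℝ) + σ) *
            wgt σ θ ρ' else 0) =
        (θ + (s.card : ℝ) + (S.card : ℝ) - (Bi.card : ℝ) - (l : ℝ) + σ) *
          (wgt σ θ π * (S.card.choose l : ℝ) * risingFac ((Bi.card : ℝ) - σ) l *
            risingFac (θ + (s.card : ℝ) - (Bi.card : ℝ) + σ) (S.card - l)) := by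
      rw [← ih hdS l, Finset.mul_sum]
      apply Finset.sum_congr rfl
      intro ρ' _
      split_ifs with h
      · rw [h]
      · rw [mul_zero]
    rw [hrest]
    cases l with
    | zero =>
      have hz : (∑ ρ' ∈ ExtP s (s ∪ S) π,
          if scnt s Bi ρ' + 1 = 0 then
            ((Bi.card : ℝ) + (scnt s Bi ρ' : ℝ) - σ) * wgt σ θ ρ' else 0) = 0 :=
        Finset.sum_eq_zero (fun ρ' _ => if_neg (by omega))
      rw [hz, Finset.card_insert_of_notMem haS]
      simp only [Nat.sub_zero, Nat.choose_zero_right, Nat.cast_one, risingFac_zero,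
        risingFac_succ]
      push_cast; ring
    | succ l' =>
      have h2 : (∑ ρ' ∈ ExtP s (s ∪ S) π,
          if scnt s Bi ρ' + 1 = l' + 1 then
            ((Bi.card : ℝ) + (scnt s Bi ρ' : ℝ) - σ) * wgt σ θ ρ' else 0) =
          ((Bi.card : ℝ) + (l' : ℝ) - σ) *
            (wgt σ θ π * (S.card.choose l' : ℝ) * risingFac ((Bi.card : ℝ) - σ) l' *
              risingFac (θ + (s.card : ℝ) - (Bi.card : ℝ) + σ) (S.card - l')) := by
        rw [← ih hdS l', Finset.mul_sum]
        apply Finset.sum_congr rfl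
        intro ρ' _
        by_cases h : scnt s Bi ρ' = l'
        · rw [if_pos (by omega), if_pos h, h]
        · rw [if_neg (by omega), if_neg h, mul_zero]
      rw [h2, Finset.card_insert_of_notMem haS]
      have hss : S.card + 1 - (l' + 1) = S.card - l' := by omega
      rw [hss, Nat.choose_succ_succ, risingFac_succ ((Bi.card : ℝ) - σ) l']
      by_cases hlu : l' + 1 ≤ S.card
      · have hu : S.card - l' = (S.card - (l' + 1)) + 1 := by omega
        rw [hu, risingFac_succ]
        have hc2 : ((S.card - (l' + 1) : ℕ) : ℝ) = (S.card : ℝ) - (l' : ℝ) - 1 := by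
          push_cast [Nat.cast_sub hlu]; ring
        rw [hc2]
        push_cast; ring
      · have h0 : S.card.choose (l' + 1) = 0 := Nat.choose_eq_zero_of_lt (by omega)
        rw [h0]
        push_cast; ring

end Aux4

section Final

lemma oldSet_card (n m : ℕ) : (oldSet n m).card = n := by
  have h : oldSet n m = Finset.image (Fin.castLE (Nat.le_add_right n m)) Finset.univ := by
    ext x
    simp only [oldSet, Finset.mem_filter, Finset.mem_univ, true_and, Finset.mem_image]
    constructor
    · intro hx
      exact ⟨⟨x.val, hx⟩, rfl⟩
    · rintro ⟨y, rfl⟩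
      exact y.isLt
  rw [h, Finset.card_image_of_injective _ (Fin.castLE_injective _), Finset.card_univ,
    Fintype.card_fin]

theorem looking_backward_freq_estimator_complete_EP'
    (n m j : ℕ) (hn : 1 ≤ n) (hm : 1 ≤ m)
    (σ θ : ℝ) (hσ0 : 0 < σ) (hσ1 : σ < 1) (hθ : -σ < θ)
    (B : Fin j → Finset (Fin (n + m))) (hBinj : Function.Injective B)
    (hπ : IsPartOn (oldSet n m) (Finset.image B Finset.univ))
    (hVnj : 0 < EPV σ θ n j)
    (l : ℕ) (hl : l ≤ m) :
    condExpPi σ (EPV σ θ) n m (Finset.image B Finset.univ)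
        (fun ρ => (RlcntB n m j l B ρ : ℝ)) =
      (1 / risingFac (θ + n) m) * (Nat.choose m l : ℝ) *
        ∑ i ∈ Finset.Icc 1 n,
          ((Finset.univ.filter fun ℓ : Fin j => (B ℓ).card = i).card : ℝ) *
            risingFac ((i : ℝ) - σ) l * risingFac (θ + (n : ℝ) - (i : ℝ) + σ) (m - l) := by
  set s := oldSet n m with hsdef
  set π := Finset.image B Finset.univ with hπdef
  set Snew := (Finset.univ : Finset (Fin (n + m))) \ s with hSnewdef
  have hscard : s.card = n := oldSet_card n m
  have hdisj : Disjoint Snew s := Finset.sdiff_disjoint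
  have hunion : s ∪ Snew = Finset.univ := Finset.union_sdiff_of_subset (Finset.subset_univ s)
  have hScard : Snew.card = m := by
    rw [hSnewdef, Finset.card_sdiff_of_subset (Finset.subset_univ s), hscard, Finset.card_univ,
      Fintype.card_fin]
    omega
  have hπcard : π.card = j := by
    rw [hπdef, Finset.card_image_of_injective _ hBinj, Finset.card_univ, Fintype.card_fin]
  -- nonvanishing facts
  have hθn : risingFac θ n ≠ 0 := by
    intro h
    rw [EPV, h, div_zero] at hVnj
    exact lt_irrefl 0 hVnj
  have hnum0 : (∏ i ∈ Finset.range j, (θ + (i : ℝ) * σ)) ≠ 0 := by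
    intro h
    rw [EPV, h, zero_div] at hVnj
    exact lt_irrefl 0 hVnj
  have hθ0 : θ ≠ 0 := by
    intro h
    apply hθn
    rw [risingFac]
    refine Finset.prod_eq_zero (Finset.mem_range.2 hn) ?_
    simp [h]
  have hR : risingFac θ (n + m) ≠ 0 := by
    rw [risingFac]
    apply Finset.prod_ne_zero_iff.2
    intro i _
    rcases Nat.eq_zero_or_pos i with h | h
    · simpa [h] using hθ0
    · have h1 : (1 : ℝ) ≤ (i : ℝ) := by exact_mod_cast h
      intro hc
      nlinarith
  have hrpos : ∀ (x : ℝ) (k : ℕ), 0 < x → 0 < risingFac x k := by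
    intro x k hx
    rw [risingFac]
    apply Finset.prod_pos
    intro i _
    have : (0 : ℝ) ≤ (i : ℝ) := Nat.cast_nonneg i
    linarith
  have hwπ : wgt σ θ π ≠ 0 := by
    rw [wgt, hπcard]
    apply mul_ne_zero hnum0
    apply ne_of_gt
    apply Finset.prod_pos
    intro C _
    exact hrpos _ _ (by linarith)
  have hn1 : (1 : ℝ) ≤ (n : ℝ) := by exact_mod_cast hn
  have hP2 : risingFac (θ + (n : ℝ)) m ≠ 0 := ne_of_gt (hrpos _ _ (by linarith))
  have hgw : ∀ ρ : Finset (Finset (Fin (n + m))),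
      gibbsW σ (EPV σ θ (n + m)) ρ = wgt σ θ ρ / risingFac θ (n + m) := by
    intro ρ
    rw [gibbsW, EPV, wgt, div_mul_eq_mul_div]
  have hext : extensions n m π = ExtP s Finset.univ π := rfl
  -- denominator
  have hden : ∑ ρ ∈ extensions n m π, gibbsW σ (EPV σ θ (n + m)) ρ =
      (wgt σ θ π * risingFac (θ + (n : ℝ)) m) / risingFac θ (n + m) := by
    rw [hext, ← hunion, Finset.sum_congr rfl (fun ρ _ => hgw ρ), ← Finset.sum_div,
      sum_wgt_ExtP σ θ hπ Snew hdisj, hscard, hScard]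
  -- numerator
  have hnumer : ∑ ρ ∈ extensions n m π, (RlcntB n m j l B ρ : ℝ) * gibbsW σ (EPV σ θ (n + m)) ρ =
      (∑ i : Fin j, wgt σ θ π * (m.choose l : ℝ) * risingFac (((B i).card : ℝ) - σ) l *
        risingFac (θ + (n : ℝ) - ((B i).card : ℝ) + σ) (m - l)) / risingFac θ (n + m) := by
    have hterm : ∀ ρ ∈ extensions n m π,
        (RlcntB n m j l B ρ : ℝ) * gibbsW σ (EPV σ θ (n + m)) ρ =
        ∑ i : Fin j, (if scnt s (B i) ρ = l then wgt σ θ ρ else 0) / risingFac θ (n + m) := by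
      intro ρ _
      rw [RlcntB, Finset.card_filter, hgw ρ]
      push_cast
      rw [Finset.sum_mul]
      apply Finset.sum_congr rfl
      intro i _
      have hsc : Scount n m (B i) ρ = scnt s (B i) ρ := rfl
      rw [hsc]
      split_ifs with h
      · rw [one_mul]
      · rw [zero_mul, zero_div]
    rw [Finset.sum_congr rfl hterm, Finset.sum_comm, Finset.sum_div]
    apply Finset.sum_congr rfl
    intro i _
    rw [← Finset.sum_div]
    congr 1
    have hBim : B i ∈ π := Finset.mem_image_of_mem B (Finset.mem_univ i)
    have := sum_wgt_scnt_ExtP σ θ hπ hBim Snew hdisj l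
    rw [hscard, hScard] at this
    rw [hext, ← hunion, this]
  -- regroup the RHS sum
  have hmaps : ∀ ℓ ∈ (Finset.univ : Finset (Fin j)), (B ℓ).card ∈ Finset.Icc 1 n := by
    intro ℓ _
    have hBm : B ℓ ∈ π := Finset.mem_image_of_mem B (Finset.mem_univ ℓ)
    rw [Finset.mem_Icc]
    constructor
    · exact Finset.card_pos.2 (Finset.nonempty_iff_ne_empty.2 (isPartOn_nonempty hπ hBm))
    · calc (B ℓ).card ≤ s.card := Finset.card_le_card (hπ.1 _ hBm)
        _ = n := hscard
  have hgroup : (∑ i ∈ Finset.Icc 1 n,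
        ((Finset.univ.filter fun ℓ : Fin j => (B ℓ).card = i).card : ℝ) *
          risingFac ((i : ℝ) - σ) l * risingFac (θ + (n : ℝ) - (i : ℝ) + σ) (m - l)) =
      ∑ ℓ : Fin j, risingFac (((B ℓ).card : ℝ) - σ) l *
        risingFac (θ + (n : ℝ) - ((B ℓ).card : ℝ) + σ) (m - l) := by
    rw [← Finset.sum_fiberwise_of_maps_to hmaps
      (fun ℓ => risingFac (((B ℓ).card : ℝ) - σ) l *
        risingFac (θ + (n : ℝ) - ((B ℓ).card : ℝ) + σ) (m - l))]
    apply Finset.sum_congr rfl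
    intro i _
    rw [Finset.sum_congr rfl (fun ℓ hℓ => by rw [(Finset.mem_filter.1 hℓ).2]),
      Finset.sum_const, nsmul_eq_mul]
    ring
  rw [condExpPi, hnumer, hden, div_div_eq_mul_div, div_mul_cancel₀ _ hR]
  have hsum2 : (∑ i : Fin j, wgt σ θ π * (m.choose l : ℝ) * risingFac (((B i).card : ℝ) - σ) l *
      risingFac (θ + (n : ℝ) - ((B i).card : ℝ) + σ) (m - l)) =
      wgt σ θ π * ((m.choose l : ℝ) * ∑ i : Fin j, risingFac (((B i).card : ℝ) - σ) l *
        risingFac (θ + (n : ℝ) - ((B i).card : ℝ) + σ) (m - l)) := by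
    conv_rhs => rw [Finset.mul_sum, Finset.mul_sum]
    apply Finset.sum_congr rfl
    intro i _
    ring
  rw [hsum2, mul_div_mul_left _ _ hwπ, hgroup]
  rw [div_eq_mul_inv, one_div]
  ring

end Final

/-- Ewens–Pitman, expected number of old species re-observed with
frequency `l`, given complete information. -/
theorem looking_backward_freq_estimator_complete_EP
    (n m j : ℕ) (hn : 1 ≤ n) (hm : 1 ≤ m)
    (σ θ : ℝ) (hσ0 : 0 < σ) (hσ1 : σ < 1) (hθ : -σ < θ)
    (B : Fin j → Finset (Fin (n + m))) (hBinj : Function.Injective B)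
    (hπ : IsPartOn (oldSet n m) (Finset.image B Finset.univ))
    (hVnj : 0 < EPV σ θ n j)
    (l : ℕ) (hl : l ≤ m) :
    condExpPi σ (EPV σ θ) n m (Finset.image B Finset.univ)
        (fun ρ => (RlcntB n m j l B ρ : ℝ)) =
      (1 / risingFac (θ + n) m) * (Nat.choose m l : ℝ) *
        ∑ i ∈ Finset.Icc 1 n,
          ((Finset.univ.filter fun ℓ : Fin j => (B ℓ).card = i).card : ℝ) *
            risingFac ((i : ℝ) - σ) l * risingFac (θ + (n : ℝ) - (i : ℝ) + σ) (m - l) := by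
  exact looking_backward_freq_estimator_complete_EP' n m j hn hm σ θ hσ0 hσ1 hθ B hBinj hπ hVnj l hl
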